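/- The pre-limit drift is close to the limiting drift with an explicit bound: suppose y : Fin m × {0,…,K} → ℝ satisfies y(i,n) ≥ 0 for all (i,n) and Σ_{i,n} y(i,n) = 1, and Λ/C ≤ r(i) ≤ 1 for all i. Then for all real parameters a and g, the Euclidean norm of β_{a,g}(y) − β_{Λ,γ}(y) satisfies ‖β_{a,g}(y) − β_{Λ,γ}(y)‖ ≤ 2(K+1)·( |a − Λ|·C/Λ + |g − γ| ). -/

import Mathlib

open scoped BigOperators

/-- Extension of a weight `y : Fin m × {0,…,K} → ℝ` in its second coordinate to all
natural-number indices, by zero. -/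
noncomputable def extWeight {K m : ℕ} (y : Fin m × Fin (K + 1) → ℝ) (i : Fin m) (n : ℕ) : ℝ :=
  if h : n < K + 1 then y (i, ⟨n, h⟩) else 0

/-- The pre-limit drift `β_{a,g}(y) ∈ ℝ^{K+1}`:
`β_{a,g}(y)(k) = Σᵢ (a/r(i))·(y(i,k+1)·[k<K] − y(i,k)·[k>0])
               + (g − Σ_{i,n} n·y(i,n))·Σᵢ (y(i,k−1)·[k>0] − y(i,k)·[k<K])`. -/
noncomputable def preDrift (K m : ℕ) (r : Fin m → ℝ) (a g : ℝ)
    (y : Fin m × Fin (K + 1) → ℝ) : EuclideanSpace ℝ (Fin (K + 1)) :=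
  WithLp.toLp 2 fun k =>
    (∑ i : Fin m, (a / r i) *
        (extWeight y i ((k : ℕ) + 1) * (if (k : ℕ) < K then 1 else 0)
          - y (i, k) * (if 0 < (k : ℕ) then 1 else 0)))
    + (g - ∑ i : Fin m, ∑ n : Fin (K + 1), (n : ℝ) * y (i, n))
      * (∑ i : Fin m,
          (extWeight y i ((k : ℕ) - 1) * (if 0 < (k : ℕ) then 1 else 0)
            - y (i, k) * (if (k : ℕ) < K then 1 else 0)))


/-!
The drift is affine in its parameters: `β_{a,g}(y) = a • S(y) + (g − Σ n·y(i,n)) • A(y)`, so the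
difference is `(a − Λ) • S(y) + (g − γ) • A(y)`. Every coordinate of `A(y)` is a signed combination
of two column masses of `y`, each at most the total mass `1`; the same holds for `S(y)` up to the
weights `1 / r i ≤ C / Λ`. Hence the coordinates are bounded by `2` and `2C/Λ`, and a vector of
`ℝ^{K+1}` has norm at most `K + 1` times its largest coordinate.
-/

open Finset

theorem EuclideanSpace.norm_le_card_mul {ι : Type*} [Fintype ι] (v : EuclideanSpace ℝ ι) {M : ℝ}
    (h : ∀ k, |v k| ≤ M) : ‖v‖ ≤ Fintype.card ι * M := by
  let b := EuclideanSpace.basisFun ι ℝ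
  calc ‖v‖ = ‖∑ k, b.repr v k • b k‖ := by rw [b.sum_repr]
    _ ≤ ∑ k, ‖b.repr v k • b k‖ := norm_sum_le _ _
    _ ≤ ∑ _k : ι, M := sum_le_sum fun k _ => by simpa [b, norm_smul] using h k
    _ = Fintype.card ι * M := by simp

theorem abs_mul_ite_sub_mul_ite_le {x z : ℝ} (hx : 0 ≤ x) (hz : 0 ≤ z) (P Q : Prop)
    [Decidable P] [Decidable Q] :
    |x * (if P then 1 else 0) - z * (if Q then 1 else 0)| ≤ x + z := by
  split_ifs <;> rw [abs_le] <;> constructor <;> linarith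

section Drift

variable {K m : ℕ} {y : Fin m × Fin (K + 1) → ℝ}

theorem extWeight_nonneg (hy : ∀ p, 0 ≤ y p) (i : Fin m) (n : ℕ) : 0 ≤ extWeight y i n := by
  unfold extWeight
  split
  · exact hy _
  · exact le_rfl

theorem extWeight_val (y : Fin m × Fin (K + 1) → ℝ) (i : Fin m) (k : Fin (K + 1)) :
    extWeight y i k = y (i, k) := by
  simp [extWeight, k.isLt]

theorem sum_extWeight_le_sum (hy : ∀ p, 0 ≤ y p) (n : ℕ) :
    ∑ i, extWeight y i n ≤ ∑ p, y p := by
  by_cases hn : n < K + 1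
  · rw [Fintype.sum_prod_type]
    exact sum_le_sum fun i _ => by
      simpa [extWeight, hn] using single_le_sum (fun j _ => hy (i, j)) (mem_univ ⟨n, hn⟩)
  · simpa [extWeight, hn] using sum_nonneg fun p _ => hy p

theorem sum_extWeight_add_le (hy : ∀ p, 0 ≤ y p) (n : ℕ) (k : Fin (K + 1)) :
    ∑ i, (extWeight y i n + y (i, k)) ≤ 2 * ∑ p, y p := by
  have hk := sum_extWeight_le_sum hy k
  simp only [extWeight_val] at hk
  rw [sum_add_distrib]
  linarith [sum_extWeight_le_sum hy n]

noncomputable def serviceDrift (K m : ℕ) (r : Fin m → ℝ) (y : Fin m × Fin (K + 1) → ℝ) :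
    EuclideanSpace ℝ (Fin (K + 1)) :=
  WithLp.toLp 2 fun k => ∑ i, (r i)⁻¹ *
    (extWeight y i ((k : ℕ) + 1) * (if (k : ℕ) < K then 1 else 0)
      - y (i, k) * (if 0 < (k : ℕ) then 1 else 0))

noncomputable def arrivalDrift (K m : ℕ) (y : Fin m × Fin (K + 1) → ℝ) :
    EuclideanSpace ℝ (Fin (K + 1)) :=
  WithLp.toLp 2 fun k => ∑ i,
    (extWeight y i ((k : ℕ) - 1) * (if 0 < (k : ℕ) then 1 else 0)
      - y (i, k) * (if (k : ℕ) < K then 1 else 0))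

noncomputable def meanOccupancy (y : Fin m × Fin (K + 1) → ℝ) : ℝ :=
  ∑ i, ∑ n : Fin (K + 1), (n : ℝ) * y (i, n)

theorem preDrift_eq (r : Fin m → ℝ) (a g : ℝ) (y : Fin m × Fin (K + 1) → ℝ) :
    preDrift K m r a g y =
      a • serviceDrift K m r y + (g - meanOccupancy y) • arrivalDrift K m y := by
  ext k
  simp [preDrift, serviceDrift, arrivalDrift, meanOccupancy, mul_sum, div_eq_mul_inv, mul_assoc]

theorem preDrift_sub_preDrift (r : Fin m → ℝ) (a g b h : ℝ) (y : Fin m × Fin (K + 1) → ℝ) :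
    preDrift K m r a g y - preDrift K m r b h y =
      (a - b) • serviceDrift K m r y + (g - h) • arrivalDrift K m y := by
  rw [preDrift_eq, preDrift_eq]
  module

theorem norm_arrivalDrift_le (hy : ∀ p, 0 ≤ y p) :
    ‖arrivalDrift K m y‖ ≤ (K + 1) * (2 * ∑ p, y p) := by
  refine (EuclideanSpace.norm_le_card_mul (M := 2 * ∑ p, y p) _ fun k => ?_).trans_eq (by simp)
  calc |arrivalDrift K m y k| ≤ ∑ i, |extWeight y i ((k : ℕ) - 1) * (if 0 < (k : ℕ) then 1 else 0)
        - y (i, k) * (if (k : ℕ) < K then 1 else 0)| := by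
        simp only [arrivalDrift, WithLp.ofLp_toLp]
        exact abs_sum_le_sum_abs _ _
    _ ≤ ∑ i, (extWeight y i ((k : ℕ) - 1) + y (i, k)) := sum_le_sum fun i _ =>
        abs_mul_ite_sub_mul_ite_le (extWeight_nonneg hy i _) (hy _) _ _
    _ ≤ 2 * ∑ p, y p := sum_extWeight_add_le hy _ k

theorem norm_serviceDrift_le (hy : ∀ p, 0 ≤ y p) {r : Fin m → ℝ} {ρ : ℝ} (hρ : 0 < ρ)
    (hr : ∀ i, ρ⁻¹ ≤ r i) :
    ‖serviceDrift K m r y‖ ≤ (K + 1) * (ρ * (2 * ∑ p, y p)) := by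
  have hr_inv : ∀ i, (r i)⁻¹ ≤ ρ := fun i => inv_le_of_inv_le₀ hρ (hr i)
  have hr_pos : ∀ i, 0 < r i := fun i => (inv_pos.2 hρ).trans_le (hr i)
  refine (EuclideanSpace.norm_le_card_mul (M := ρ * (2 * ∑ p, y p)) _ fun k => ?_).trans_eq
    (by simp)
  calc |serviceDrift K m r y k| ≤ ∑ i, (r i)⁻¹ * |extWeight y i ((k : ℕ) + 1)
        * (if (k : ℕ) < K then 1 else 0) - y (i, k) * (if 0 < (k : ℕ) then 1 else 0)| := by
        simp only [serviceDrift, WithLp.ofLp_toLp]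
        refine (abs_sum_le_sum_abs _ _).trans_eq (sum_congr rfl fun i _ => ?_)
        rw [abs_mul, abs_of_pos (inv_pos.2 (hr_pos i))]
    _ ≤ ∑ i, ρ * (extWeight y i ((k : ℕ) + 1) + y (i, k)) := sum_le_sum fun i _ =>
        mul_le_mul (hr_inv i) (abs_mul_ite_sub_mul_ite_le (extWeight_nonneg hy i _) (hy _) _ _)
          (abs_nonneg _) hρ.le
    _ ≤ ρ * (2 * ∑ p, y p) := by
        rw [← mul_sum]
        exact mul_le_mul_of_nonneg_left (sum_extWeight_add_le hy _ k) hρ.le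

end Drift

theorem preDrift_close_to_limit_general (K : ℕ) (m : ℕ)
    (Λ' C γ : ℝ) (hΛ : 0 < Λ') (hC : Λ' ≤ C)
    (r : Fin m → ℝ) (hr : ∀ i, Λ' / C ≤ r i ∧ r i ≤ 1)
    (y : Fin m × Fin (K + 1) → ℝ)
    (hy : ∀ p, 0 ≤ y p) (hsum : ∑ p : Fin m × Fin (K + 1), y p = 1)
    (a g : ℝ) :
    ‖preDrift K m r a g y - preDrift K m r Λ' γ y‖ ≤
      2 * (K + 1) * (|a - Λ'| * C / Λ' + |g - γ|) := by
  have hρ : 0 < C / Λ' := div_pos (hΛ.trans_le hC) hΛ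
  have hS := norm_serviceDrift_le hy hρ fun i => (inv_div C Λ').trans_le (hr i).1
  have hA := norm_arrivalDrift_le (K := K) hy
  rw [hsum] at hS hA
  calc ‖preDrift K m r a g y - preDrift K m r Λ' γ y‖
      ≤ |a - Λ'| * ‖serviceDrift K m r y‖ + |g - γ| * ‖arrivalDrift K m y‖ := by
        rw [preDrift_sub_preDrift, ← Real.norm_eq_abs, ← Real.norm_eq_abs, ← norm_smul, ← norm_smul]
        exact norm_add_le _ _
    _ ≤ |a - Λ'| * ((K + 1) * (C / Λ' * (2 * 1))) + |g - γ| * ((K + 1) * (2 * 1)) := by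
        gcongr
    _ = 2 * (K + 1) * (|a - Λ'| * C / Λ' + |g - γ|) := by ring

/-- The pre-limit drift is close to the limiting drift, with the explicit bound
`‖β_{a,g}(y) − β_{Λ,γ}(y)‖ ≤ 2(K+1)·(|a − Λ|·C/Λ + |g − γ|)`. -/
theorem preDrift_close_to_limit (K : ℕ) (hK : 1 ≤ K) (m : ℕ) (hm : 1 ≤ m)
    (Λ' C γ : ℝ) (hΛ : 0 < Λ') (hC : Λ' ≤ C)
    (hγ : 0 ≤ γ)
    (r : Fin m → ℝ) (hr : ∀ i, Λ' / C ≤ r i ∧ r i ≤ 1)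
    (y : Fin m × Fin (K + 1) → ℝ)
    (hy : ∀ p, 0 ≤ y p) (hsum : ∑ p : Fin m × Fin (K + 1), y p = 1)
    (a g : ℝ) :
    ‖preDrift K m r a g y - preDrift K m r Λ' γ y‖ ≤
      2 * (K + 1) * (|a - Λ'| * C / Λ' + |g - γ|) :=
  preDrift_close_to_limit_general K m Λ' C γ hΛ hC r hr y hy hsum a g
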